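/- Let (Ω, P) be a probability space, let f : Ω → ℝ be a measurable nonnegative integrable function, and let B > 0 and α ∈ (0,1). Suppose that for every t > 0, P{ω : 0 < f(ω) ≤ t} ≤ B · t^{α/(1−α)}. Then ∫_{{f>0}} f dP ≥ α · B^{−(1−α)/α} · (P{ω : f(ω) > 0})^{1/α}. -/

import Mathlib

/-!
By the layer-cake formula, `∫ f = ∫₀^∞ P{f > t} dt`, and for `t > 0` the noise condition gives
`P{f > t} ≥ P{f > 0} - P{0 < f ≤ t} ≥ p - B t^r` with `p = P{f > 0}` and `r = α/(1-α)`.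
Integrating over `(0, u]` yields `∫ f ≥ p u - B u^{r+1}/(r+1)` for every `u ≥ 0`; at the maximiser
`u = (p/B)^{1/r}`, where `B u^r = p`, the right-hand side equals `α p u = α B^{-(1-α)/α} p^{1/α}`.
-/

open MeasureTheory Real Set

lemma measureReal_pos_sub_measureReal_Ioc_le {Ω : Type*} [MeasurableSpace Ω] (μ : Measure Ω)
    [IsFiniteMeasure μ] (f : Ω → ℝ) (t : ℝ) :
    μ.real {ω | 0 < f ω} - μ.real {ω | 0 < f ω ∧ f ω ≤ t} ≤ μ.real {ω | t < f ω} := by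
  have h_cover : {ω | 0 < f ω} ⊆ {ω | t < f ω} ∪ {ω | 0 < f ω ∧ f ω ≤ t} := fun ω hω => by
    by_cases h : t < f ω
    · exact Or.inl h
    · exact Or.inr ⟨hω, not_lt.1 h⟩
  linarith [(measureReal_mono h_cover).trans (measureReal_union_le (μ := μ) _ _)]

lemma intervalIntegral_le_integral_of_le_measureReal_lt {Ω : Type*} [MeasurableSpace Ω]
    {μ : Measure Ω} {f : Ω → ℝ} (hf : Integrable f μ) (hf_nn : 0 ≤ᵐ[μ] f) {g : ℝ → ℝ} {u : ℝ}
    (hu : 0 ≤ u) (hg : IntervalIntegrable g volume 0 u)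
    (hgf : ∀ t ∈ Ioc 0 u, g t ≤ μ.real {ω | t < f ω}) :
    ∫ t in 0..u, g t ≤ ∫ ω, f ω ∂μ := by
  have hg' : IntegrableOn g (Ioc 0 u) := (intervalIntegrable_iff_integrableOn_Ioc_of_le hu).1 hg
  have h_lintegral : ∫⁻ t in Ioc 0 u, ENNReal.ofReal (g t) ≤ ∫⁻ ω, ENNReal.ofReal (f ω) ∂μ :=
    calc ∫⁻ t in Ioc 0 u, ENNReal.ofReal (g t)
        ≤ ∫⁻ t in Ioc 0 u, μ {ω | t < f ω} := setLIntegral_mono' measurableSet_Ioc fun t ht =>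
          (ENNReal.ofReal_le_ofReal (hgf t ht)).trans ENNReal.ofReal_toReal_le
      _ ≤ ∫⁻ t in Ioi 0, μ {ω | t < f ω} := lintegral_mono_set Ioc_subset_Ioi_self
      _ = ∫⁻ ω, ENNReal.ofReal (f ω) ∂μ :=
          (lintegral_eq_lintegral_meas_lt μ hf_nn hf.aemeasurable).symm
  calc ∫ t in 0..u, g t
      ≤ (∫⁻ t in Ioc 0 u, ENNReal.ofReal (g t)).toReal := by
        rw [intervalIntegral.integral_of_le hu,
          integral_eq_lintegral_pos_part_sub_lintegral_neg_part hg']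
        exact sub_le_self _ ENNReal.toReal_nonneg
    _ ≤ (∫⁻ ω, ENNReal.ofReal (f ω) ∂μ).toReal :=
        ENNReal.toReal_mono hf.lintegral_lt_top.ne h_lintegral
    _ = ∫ ω, f ω ∂μ := (integral_eq_lintegral_of_nonneg_ae hf_nn hf.aestronglyMeasurable).symm

lemma intervalIntegrable_const_sub_mul_rpow (p B : ℝ) {r : ℝ} (hr : -1 < r) (a b : ℝ) :
    IntervalIntegrable (fun t => p - B * t ^ r) volume a b :=
  intervalIntegrable_const.sub ((intervalIntegral.intervalIntegrable_rpow' hr).const_mul B)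

lemma integral_const_sub_mul_rpow (p B : ℝ) {r : ℝ} (hr : -1 < r) (u : ℝ) :
    ∫ t in 0..u, (p - B * t ^ r) = p * u - B * (u ^ (r + 1) / (r + 1)) := by
  rw [intervalIntegral.integral_sub intervalIntegrable_const
      ((intervalIntegral.intervalIntegrable_rpow' hr).const_mul B),
    intervalIntegral.integral_const, intervalIntegral.integral_const_mul, integral_rpow (Or.inl hr),
    zero_rpow (by linarith), smul_eq_mul]
  ring

lemma mul_sub_mul_rpow_div_eq_of_eq_rpow {p B α u : ℝ} (hp : 0 ≤ p) (hB : 0 < B)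
    (hα : α ∈ Ioo 0 1) (hu : u = (p / B) ^ ((1 - α) / α)) :
    p * u - B * (u ^ (α / (1 - α) + 1) / (α / (1 - α) + 1)) =
      α * B ^ (-(1 - α) / α) * p ^ (1 / α) := by
  obtain ⟨hα0, hα1⟩ := hα
  have h1α : 1 - α ≠ 0 := by linarith
  have hpB : 0 ≤ p / B := div_nonneg hp hB.le
  have h_balance : B * u ^ (α / (1 - α)) = p := by
    have h_inv : (1 - α) / α * (α / (1 - α)) = 1 := by field_simp
    rw [hu, ← rpow_mul hpB, h_inv, rpow_one, mul_div_cancel₀ _ hB.ne']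
  have h_succ : u ^ (α / (1 - α) + 1) = u ^ (α / (1 - α)) * u := by
    rw [rpow_add' (hu ▸ rpow_nonneg hpB _) (by positivity), rpow_one]
  have hpu : p * u = B ^ (-(1 - α) / α) * p ^ (1 / α) := by
    rw [hu, div_rpow hp hB.le, div_eq_mul_inv, ← rpow_neg hB.le, ← mul_assoc,
      ← rpow_one_add' hp (by positivity), neg_div, mul_comm]
    congr 2
    field_simp
    ring
  have h_ratio : α / (1 - α) / (α / (1 - α) + 1) = α := by field_simp; ring
  calc p * u - B * (u ^ (α / (1 - α) + 1) / (α / (1 - α) + 1))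
      = α / (1 - α) / (α / (1 - α) + 1) * (p * u) := by rw [h_succ, ← h_balance]; field_simp; ring
    _ = α * B ^ (-(1 - α) / α) * p ^ (1 / α) := by rw [h_ratio, hpu, mul_assoc]

theorem stmt_2_general {Ω : Type*} [MeasurableSpace Ω] (P : Measure Ω) [IsProbabilityMeasure P]
    (f : Ω → ℝ) (hf_nonneg : ∀ ω, 0 ≤ f ω)
    (hf_int : Integrable f P)
    (B α : ℝ) (hB : 0 < B) (hα : α ∈ Set.Ioo (0 : ℝ) 1)
    (hMM : ∀ t > (0 : ℝ),
      (P {ω | 0 < f ω ∧ f ω ≤ t}).toReal ≤ B * t ^ (α / (1 - α))) :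
    α * B ^ (-(1 - α) / α) * (P {ω | 0 < f ω}).toReal ^ (1 / α) ≤
      ∫ ω in {ω | 0 < f ω}, f ω ∂P := by
  set p := (P {ω | 0 < f ω}).toReal
  set r := α / (1 - α)
  set u := (p / B) ^ ((1 - α) / α) with hu
  have hr : -1 < r := by linarith [div_pos hα.1 (sub_pos.2 hα.2)]
  have h_tail : ∀ t ∈ Ioc 0 u, p - B * t ^ r ≤ P.real {ω | t < f ω} := fun t ht =>
    (sub_le_sub_left (hMM t ht.1) p).trans (measureReal_pos_sub_measureReal_Ioc_le P f t)
  calc α * B ^ (-(1 - α) / α) * p ^ (1 / α)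
      = p * u - B * (u ^ (r + 1) / (r + 1)) :=
        (mul_sub_mul_rpow_div_eq_of_eq_rpow ENNReal.toReal_nonneg hB hα hu).symm
    _ = ∫ t in 0..u, (p - B * t ^ r) := (integral_const_sub_mul_rpow p B hr u).symm
    _ ≤ ∫ ω, f ω ∂P :=
        intervalIntegral_le_integral_of_le_measureReal_lt hf_int (ae_of_all _ hf_nonneg)
          (by positivity) (intervalIntegrable_const_sub_mul_rpow p B hr 0 u) h_tail
    _ = ∫ ω in {ω | 0 < f ω}, f ω ∂P :=
        (setIntegral_eq_integral_of_forall_compl_eq_zero fun ω hω =>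
          le_antisymm (not_lt.1 hω) (hf_nonneg ω)).symm

/-- Optimized form of the intermediate inequality in the proof of the key
MM-noise property: the integral of `f` over `{f > 0}` dominates
`α · B^{−(1−α)/α} · (P{f > 0})^{1/α}`. -/
theorem stmt_2 {Ω : Type*} [MeasurableSpace Ω] (P : Measure Ω) [IsProbabilityMeasure P]
    (f : Ω → ℝ) (hf_meas : Measurable f) (hf_nonneg : ∀ ω, 0 ≤ f ω)
    (hf_int : Integrable f P)
    (B α : ℝ) (hB : 0 < B) (hα : α ∈ Set.Ioo (0 : ℝ) 1)
    (hMM : ∀ t > (0 : ℝ),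
      (P {ω | 0 < f ω ∧ f ω ≤ t}).toReal ≤ B * t ^ (α / (1 - α))) :
    α * B ^ (-(1 - α) / α) * (P {ω | 0 < f ω}).toReal ^ (1 / α) ≤
      ∫ ω in {ω | 0 < f ω}, f ω ∂P :=
  stmt_2_general P f hf_nonneg hf_int B α hB hα hMM
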